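/- Let $w(x) = C e^{ax+b}$ with $C > 0$, $a, b \in \mathbb{R}$, and define the one-step transition density $p_1(x|y, \sigma) = k_\sigma(x;y)\, w(x) / \int_{\mathbb{R}} k_\sigma(z;y)\, w(z)\, dz$. Then for every $n \geq 1$ and all $x, y \in \mathbb{R}$, the $n$-step density $p_n(x|y,\sigma) = \int_{\mathbb{R}^{n-1}} \prod_{k=1}^n p_1(x_k|x_{k-1},\sigma)\, dx_1 \cdots dx_{n-1}$ (with $x_0 = y$, $x_n = x$) equals $p_1(x|y, \sqrt{n}\sigma)$. -/

import Mathlib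

open MeasureTheory Real

/-- Gaussian density with mean `m` and standard deviation `σ`, evaluated at `y`. -/
noncomputable def gauss (σ m y : ℝ) : ℝ :=
  (Real.sqrt (2 * Real.pi) * σ)⁻¹ * Real.exp (-(y - m) ^ 2 / (2 * σ ^ 2))

/-- Exponential weighting function. -/
noncomputable def wexp (C a b x : ℝ) : ℝ := C * Real.exp (a * x + b)

/-- One-step transition density: Gaussian kernel weighted by `wexp` and normalized.
`p1exp C a b σ y x` is the density of a step from `y` to `x`. -/
noncomputable def p1exp (C a b σ y x : ℝ) : ℝ :=
  gauss σ y x * wexp C a b x / ∫ z : ℝ, gauss σ y z * wexp C a b z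

/-- `pnexp C a b σ n y x` is the `(n+1)`-step density obtained by iterated
(Chapman–Kolmogorov) integration over the intermediate locations. -/
noncomputable def pnexp (C a b σ : ℝ) : ℕ → ℝ → ℝ → ℝ
  | 0 => fun y x => p1exp C a b σ y x
  | (m + 1) => fun y x => ∫ z : ℝ, pnexp C a b σ m y z * p1exp C a b σ z x

/-
Exponential tilting: `gauss σ y z * exp (a * z)` is a constant multiple of
`gauss σ (y + a * σ ^ 2) z`, so after normalization the one-step density is exactly the Gaussian
kernel with drift `a * σ ^ 2`. The product of two Gaussian kernels factors, by completing the square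
in the intermediate point, into a Gaussian in the endpoint with added variances times a normalized
Gaussian in the intermediate point. Hence the `n`-step density is `gauss (√n * σ) (y + n * a * σ ^ 2)`,
which is the one-step density at scale `√n * σ`.
-/

open ProbabilityTheory

lemma gauss_eq_gaussianPDFReal {σ : ℝ} (hσ : 0 ≤ σ) (m y : ℝ) :
    gauss σ m y = gaussianPDFReal m (σ ^ 2).toNNReal y := by
  rw [gauss, gaussianPDFReal, coe_toNNReal _ (sq_nonneg σ), sqrt_mul' _ (sq_nonneg σ),
    sqrt_sq hσ]

lemma integral_gauss {σ : ℝ} (hσ : 0 < σ) (m : ℝ) : ∫ y, gauss σ m y = 1 := by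
  simp_rw [gauss_eq_gaussianPDFReal hσ.le]
  exact integral_gaussianPDFReal_eq_one m (by simpa using hσ.ne')

lemma gauss_shift (σ m c x : ℝ) : gauss σ (m + c) x = gauss σ m (x - c) := by
  unfold gauss; ring_nf

lemma gauss_mul_exp {σ : ℝ} (hσ : σ ≠ 0) (m a z : ℝ) :
    gauss σ m z * exp (a * z) = exp (a * m + a ^ 2 * σ ^ 2 / 2) * gauss σ (m + a * σ ^ 2) z := by
  have h : -(z - m) ^ 2 / (2 * σ ^ 2) + a * z =
      (a * m + a ^ 2 * σ ^ 2 / 2) + -(z - (m + a * σ ^ 2)) ^ 2 / (2 * σ ^ 2) := by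
    field_simp
    ring
  rw [gauss, gauss, mul_assoc, ← exp_add, h, exp_add]
  ring

lemma integral_gauss_mul_exp {σ : ℝ} (hσ : 0 < σ) (m a : ℝ) :
    ∫ z, gauss σ m z * exp (a * z) = exp (a * m + a ^ 2 * σ ^ 2 / 2) := by
  simp_rw [gauss_mul_exp hσ.ne', integral_const_mul, integral_gauss hσ, mul_one]

lemma p1exp_eq_gauss {C : ℝ} (hC : C ≠ 0) (a b : ℝ) {σ : ℝ} (hσ : 0 < σ) (y x : ℝ) :
    p1exp C a b σ y x = gauss σ (y + a * σ ^ 2) x := by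
  have hw (z : ℝ) : gauss σ y z * wexp C a b z = C * exp b * (gauss σ y z * exp (a * z)) := by
    rw [wexp, exp_add]; ring
  simp_rw [p1exp, hw, integral_const_mul, integral_gauss_mul_exp hσ, gauss_mul_exp hσ.ne']
  field_simp

lemma gauss_mul_gauss {σ₁ σ₂ : ℝ} (h₁ : 0 < σ₁) (h₂ : 0 < σ₂) (m x z : ℝ) :
    gauss σ₁ m z * gauss σ₂ z x =
      gauss √(σ₁ ^ 2 + σ₂ ^ 2) m x *
        gauss (σ₁ * σ₂ / √(σ₁ ^ 2 + σ₂ ^ 2)) ((σ₂ ^ 2 * m + σ₁ ^ 2 * x) / (σ₁ ^ 2 + σ₂ ^ 2)) z := by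
  have hs : √(σ₁ ^ 2 + σ₂ ^ 2) ^ 2 = σ₁ ^ 2 + σ₂ ^ 2 := sq_sqrt (by positivity)
  have hs₀ : 0 < √(σ₁ ^ 2 + σ₂ ^ 2) := sqrt_pos.mpr (by positivity)
  unfold gauss
  rw [mul_mul_mul_comm, mul_mul_mul_comm _ (exp _), ← exp_add, ← exp_add]
  congr 1
  · field_simp
  · congr 1
    rw [div_pow, hs]
    field_simp
    ring

lemma integral_gauss_mul_gauss {σ₁ σ₂ : ℝ} (h₁ : 0 < σ₁) (h₂ : 0 < σ₂) (m x : ℝ) :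
    ∫ z, gauss σ₁ m z * gauss σ₂ z x = gauss √(σ₁ ^ 2 + σ₂ ^ 2) m x := by
  have hτ : 0 < σ₁ * σ₂ / √(σ₁ ^ 2 + σ₂ ^ 2) := by positivity
  simp_rw [gauss_mul_gauss h₁ h₂, integral_const_mul, integral_gauss hτ, mul_one]

lemma pnexp_eq_gauss {C : ℝ} (hC : C ≠ 0) (a b : ℝ) {σ : ℝ} (hσ : 0 < σ) (m : ℕ) (y x : ℝ) :
    pnexp C a b σ m y x = gauss (√(m + 1 : ℕ) * σ) (y + (m + 1 : ℕ) * a * σ ^ 2) x := by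
  induction m generalizing x with
  | zero => simp [pnexp, p1exp_eq_gauss hC a b hσ]
  | succ m ih =>
    have hσm : 0 < √(m + 1 : ℕ) * σ := by positivity
    have hvar : (√(m + 1 : ℕ) * σ) ^ 2 + σ ^ 2 = (m + 1 + 1 : ℕ) * σ ^ 2 := by
      rw [mul_pow, sq_sqrt (by positivity)]
      push_cast
      ring
    simp_rw [pnexp, ih, p1exp_eq_gauss hC a b hσ, gauss_shift σ _ (a * σ ^ 2),
      integral_gauss_mul_gauss hσm hσ, hvar, sqrt_mul' _ (sq_nonneg σ), sqrt_sq hσ.le,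
      ← gauss_shift]
    push_cast
    ring_nf

theorem exp_weight_robust (C a b σ : ℝ) (hC : 0 < C) (hσ : 0 < σ) (n : ℕ) (hn : 1 ≤ n)
    (x y : ℝ) :
    pnexp C a b σ (n - 1) y x = p1exp C a b (Real.sqrt n * σ) y x := by
  obtain ⟨m, rfl⟩ : ∃ m, n = m + 1 := ⟨n - 1, by omega⟩
  rw [Nat.add_sub_cancel, pnexp_eq_gauss hC.ne' a b hσ, p1exp_eq_gauss hC.ne' a b (by positivity),
    mul_pow, sq_sqrt (by positivity)]
  ring_nf
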